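/- The formal power series M(z) = ∑_{n≥1} m_n z^n with m_n = 2·3^n/((n+1)(n+2)) · C(2n,n) satisfies 54 z^2 (M(z)+1) = 18z - 1 + (1-12z)^{3/2} as an identity of analytic functions for |z| < 1/12. -/

import Mathlib

/-!
By the binomial series, `(1 - 12z)^{3/2} = ∑ c_k z^k` with `c_k = C(3/2, k) (-12)^k`, so
`(k + 1) c_{k+1} = (12k - 18) c_k`. Shifted by two, this is the recurrence
`(n + 3) m_{n+1} = 6 (2n + 1) m_n` satisfied by Tutte's numbers (extended by `m_0 = 1`), and
`c_2 = 54 m_0`; hence `c_{n+2} = 54 m_n`. The identity is the binomial series with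
`c_0 + c_1 z = 1 - 18z` split off.
-/

open Finset

theorem Ring.succ_nsmul_choose_succ {R : Type*} [NonAssocRing R] [Pow R ℕ] [NatPowAssoc R]
    [BinomialRing R] (r : R) (n : ℕ) :
    (n + 1) • Ring.choose r (n + 1) = Ring.choose r n * (r - n) := by
  simpa using Ring.choose_smul_choose r (Nat.le_succ n)

theorem Real.hasSum_one_add_rpow {a x : ℝ} (hx : |x| < 1) :
    HasSum (fun n ↦ Ring.choose a n * x ^ n) ((1 + x) ^ a) := by
  have hx' : x ∈ Metric.eball (0 : ℝ) 1 := by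
    simpa [Metric.mem_eball, edist_dist, Real.dist_eq] using hx
  simpa only [zero_add, binomialSeries_apply, List.ofFn_const, List.prod_replicate, smul_eq_mul]
    using Real.one_add_rpow_hasFPowerSeriesOnBall_zero.hasSum hx'

noncomputable def planarMapCount (n : ℕ) : ℝ :=
  2 * 3 ^ n / (((n : ℝ) + 1) * ((n : ℝ) + 2)) * (Nat.choose (2 * n) n : ℝ)

theorem planarMapCount_zero : planarMapCount 0 = 1 := by
  norm_num [planarMapCount]

theorem planarMapCount_succ (n : ℕ) :
    ((n : ℝ) + 3) * planarMapCount (n + 1) = 6 * (2 * n + 1) * planarMapCount n := by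
  have hbinom : ((n : ℝ) + 1) * Nat.centralBinom (n + 1) =
      2 * (2 * n + 1) * Nat.centralBinom n := by
    exact_mod_cast Nat.succ_mul_centralBinom_succ n
  simp only [planarMapCount, ← Nat.centralBinom_eq_two_mul_choose]
  push_cast
  field_simp
  linear_combination (3 * 3 ^ n * ((n : ℝ) + 2) * (n + 3)) * hbinom

noncomputable def threeHalvesCoeff (k : ℕ) : ℝ :=
  Ring.choose (3 / 2 : ℝ) k * (-12) ^ k

theorem threeHalvesCoeff_succ (k : ℕ) :
    ((k : ℝ) + 1) * threeHalvesCoeff (k + 1) = (12 * k - 18) * threeHalvesCoeff k := by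
  have h := Ring.succ_nsmul_choose_succ (3 / 2 : ℝ) k
  rw [nsmul_eq_mul] at h
  push_cast at h
  simp only [threeHalvesCoeff, pow_succ]
  linear_combination (-12) ^ k * (-12) * h

theorem threeHalvesCoeff_zero : threeHalvesCoeff 0 = 1 := by
  simp [threeHalvesCoeff]

theorem threeHalvesCoeff_one : threeHalvesCoeff 1 = -18 := by
  simpa [threeHalvesCoeff_zero] using threeHalvesCoeff_succ 0

theorem threeHalvesCoeff_two : threeHalvesCoeff 2 = 54 := by
  have h := threeHalvesCoeff_succ 1
  rw [threeHalvesCoeff_one] at h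
  norm_num at h
  linarith

theorem threeHalvesCoeff_add_two (n : ℕ) : threeHalvesCoeff (n + 2) = 54 * planarMapCount n := by
  induction n with
  | zero => rw [threeHalvesCoeff_two, planarMapCount_zero, mul_one]
  | succ n ih =>
    have hc := threeHalvesCoeff_succ (n + 2)
    have hm := planarMapCount_succ n
    push_cast at hc
    have hn : (n : ℝ) + 3 ≠ 0 := by positivity
    apply mul_left_cancel₀ hn
    linear_combination hc + (12 * (n : ℝ) + 6) * ih - 54 * hm

theorem hasSum_threeHalvesCoeff_mul_pow {z : ℝ} (hz : |z| < 1 / 12) :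
    HasSum (fun k ↦ threeHalvesCoeff k * z ^ k) ((1 - 12 * z) ^ (3 / 2 : ℝ)) := by
  have hx : |-12 * z| < 1 := by
    rw [abs_mul]
    norm_num
    linarith
  convert Real.hasSum_one_add_rpow (a := 3 / 2) hx using 1
  · ext k
    rw [threeHalvesCoeff, mul_pow, mul_assoc]
  · ring_nf

/-- The power series `M(z) = ∑_{n≥1} m_n z^n`, with
`m_n = 2·3^n/((n+1)(n+2)) · C(2n,n)` the number of rooted planar maps with `n` edges,
satisfies `54 z² (M(z)+1) = 18z − 1 + (1−12z)^{3/2}` for `|z| < 1/12`. -/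
theorem stmt_1 (z : ℝ) (hz : |z| < 1 / 12) :
    54 * z ^ 2 *
        ((∑' n : ℕ,
            (2 * 3 ^ (n + 1) / (((n : ℝ) + 2) * ((n : ℝ) + 3))
                * (Nat.choose (2 * (n + 1)) (n + 1) : ℝ)) * z ^ (n + 1)) + 1)
      = 18 * z - 1 + (1 - 12 * z) ^ ((3 : ℝ) / 2) := by
  have hterm : ∀ n : ℕ, threeHalvesCoeff (n + 3) * z ^ (n + 3) =
      54 * z ^ 2 * (2 * 3 ^ (n + 1) / (((n : ℝ) + 2) * ((n : ℝ) + 3))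
        * (Nat.choose (2 * (n + 1)) (n + 1) : ℝ) * z ^ (n + 1)) := by
    intro n
    rw [threeHalvesCoeff_add_two (n + 1), planarMapCount]
    push_cast
    ring
  have hsum := (hasSum_nat_add_iff' 3).mpr (hasSum_threeHalvesCoeff_mul_pow hz)
  simp only [hterm, sum_range_succ, sum_range_zero, threeHalvesCoeff_zero, threeHalvesCoeff_one,
    threeHalvesCoeff_two] at hsum
  rw [mul_add, ← tsum_mul_left, hsum.tsum_eq]
  ring
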